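/- Let G and H be connected multigraphs joined at exactly one vertex and let e be a regular edge of G (not a bridge, not a self-loop, and G∖e is not a tree). Then Condition 1 holds for (G,e) if and only if Condition 1 holds for (G∪H, e). -/

import Mathlib

/-- A multigraph: each edge `e` has endpoints `fst e` and `snd e`. -/
structure Multigraph (V : Type) (E : Type) where
  fst : E → V
  snd : E → V

namespace Multigraph

variable {V E V' E' W : Type}

/-- Adjacency using only edges in the set `S`. -/
def Adj (G : Multigraph V E) (S : Set E) (u v : V) : Prop :=
  ∃ e ∈ S, (G.fst e = u ∧ G.snd e = v) ∨ (G.fst e = v ∧ G.snd e = u)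

/-- All vertices are connected using edges from `S`. -/
def ConnOn (G : Multigraph V E) (S : Set E) : Prop :=
  ∀ u v : V, Relation.ReflTransGen (G.Adj S) u v

/-- The multigraph is connected. -/
def ConnectedGraph (G : Multigraph V E) : Prop := G.ConnOn Set.univ

/-- A spanning tree: a minimally spanning-connected edge set. -/
def IsSpanningTree (G : Multigraph V E) [DecidableEq E] (T : Finset E) : Prop :=
  G.ConnOn ↑T ∧ ∀ e ∈ T, ¬ G.ConnOn ↑(T.erase e)

open Classical in
/-- The Kirchhoff polynomial `Ψ_G = ∑_{T spanning tree} ∏_{e ∉ T} t_e`. -/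
noncomputable def kirchhoff (G : Multigraph V E) [Fintype E] [DecidableEq E] :
    MvPolynomial E ℚ :=
  ∑ T : Finset E, if G.IsSpanningTree T then ∏ e ∈ Tᶜ, MvPolynomial.X e else 0

/-- Deletion of the edge `e`. -/
def delete (G : Multigraph V E) (e : E) : Multigraph V {e' : E // e' ≠ e} :=
  ⟨fun e' => G.fst e'.1, fun e' => G.snd e'.1⟩

/-- Contraction of the edge `e` (its two endpoints get identified). -/
def contract (G : Multigraph V E) (e : E) :
    Multigraph (Quot fun a b : V => a = G.fst e ∧ b = G.snd e) {e' : E // e' ≠ e} :=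
  ⟨fun e' => Quot.mk _ (G.fst e'.1), fun e' => Quot.mk _ (G.snd e'.1)⟩

/-- Identify the two vertices `a` and `b`. -/
def identify (G : Multigraph V E) (a b : V) :
    Multigraph (Quot fun x y : V => x = a ∧ y = b) E :=
  ⟨fun e => Quot.mk _ (G.fst e), fun e => Quot.mk _ (G.snd e)⟩

/-- A self-loop. -/
def IsLoop (G : Multigraph V E) (e : E) : Prop := G.fst e = G.snd e

/-- A bridge: deleting `e` disconnects the graph. -/
def IsBridge (G : Multigraph V E) (e : E) : Prop := ¬ G.ConnOn {e' | e' ≠ e}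

/-- The whole graph is a tree (its full edge set is a spanning tree). -/
def IsTreeGraph (G : Multigraph V E) [Fintype E] [DecidableEq E] : Prop := G.IsSpanningTree Finset.univ

/-- A regular edge: not a bridge, not a self-loop, and deleting it does not leave a tree. -/
def IsRegular (G : Multigraph V E) [Fintype E] [DecidableEq E] (e : E) : Prop :=
  ¬ G.IsBridge e ∧ ¬ G.IsLoop e ∧ ¬ (G.delete e).IsTreeGraph

/-- The Jacobian ideal of a polynomial: the ideal generated by its partial derivatives. -/
noncomputable def jacobianIdeal {σ : Type} (f : MvPolynomial σ ℚ) :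
    Ideal (MvPolynomial σ ℚ) :=
  Ideal.span (Set.range fun i : σ => MvPolynomial.pderiv i f)

/-- Aluffi's Condition 1 for the pair `(G, e)`: `Ψ_G` lies in the Jacobian ideal of `Ψ_{G∖e}`. -/
def Cond1 (G : Multigraph V E) [Fintype E] [DecidableEq E] (e : E) : Prop :=
  G.kirchhoff ∈
    jacobianIdeal (MvPolynomial.rename (Subtype.val : {e' : E // e' ≠ e} → E)
      (G.delete e).kirchhoff)

end Multigraph

/-!
Gluing at a single vertex makes the spanning trees of `K` exactly the disjoint unions of a
spanning tree of `G` and one of `H`, so `Ψ_K = Ψ_G(x) Ψ_H(y)` and likewise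
`Ψ_{K∖e} = f(x) Ψ_H(y)` with `f = Ψ_{G∖e}`. The partial derivatives of `f(x) g(y)` are
`∂ᵢf · g` and `f · ∂ⱼg`, so multiplying an expression of `Ψ_G` in the `∂ᵢf` by `g = Ψ_H`
gives one direction. For the other, all spanning trees of `G∖e` have `|V| - 1` edges, so `f` is
homogeneous, of positive degree because `G∖e` is not a tree; Euler's identity then puts `f` into
its own Jacobian ideal, hence every generator of the Jacobian ideal of `f g` lies in the
extension of that of `f`. Specialising `y` to a point where `Ψ_H` does not vanish (it is
nonzero as `H` is connected) returns `Ψ_G` to the Jacobian ideal of `f`.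
-/

namespace Multigraph

open Relation MvPolynomial

variable {V E V' E' W F : Type}

section Jacobian

variable {σ τ : Type}

theorem mem_jacobianIdeal_of_isHomogeneous [Fintype σ] {f : MvPolynomial σ ℚ} {n : ℕ}
    (hf : f.IsHomogeneous n) (hn : n ≠ 0) : f ∈ jacobianIdeal f := by
  have hsum : n • f ∈ jacobianIdeal f := hf.sum_X_mul_pderiv ▸
    Ideal.sum_mem _ fun i _ => Ideal.mul_mem_left _ _ (Ideal.subset_span ⟨i, rfl⟩)
  have hinv : C (n : ℚ)⁻¹ * (n • f) = f := by
    rw [nsmul_eq_mul, ← mul_assoc, ← map_natCast C, ← C_mul,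
      inv_mul_cancel₀ (Nat.cast_ne_zero.2 hn), C_1, one_mul]
  have := Ideal.mul_mem_left _ (C (n : ℚ)⁻¹) hsum
  rwa [hinv] at this

theorem rename_mem_jacobianIdeal {f : σ → τ} (hf : Function.Injective f)
    {p : MvPolynomial σ ℚ} (hp : p ∈ jacobianIdeal p) :
    rename f p ∈ jacobianIdeal (rename f p) := by
  refine Ideal.map_le_iff_le_comap.2 ?_ (Ideal.mem_map_of_mem (rename f) hp)
  refine Ideal.span_le.2 ?_
  rintro _ ⟨i, rfl⟩
  exact Ideal.subset_span ⟨f i, pderiv_rename hf i p⟩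

theorem pderiv_rename_of_notMem_range {R : Type} [CommSemiring R] {f : σ → τ} {i : τ}
    (hi : i ∉ Set.range f) (p : MvPolynomial σ R) : pderiv i (rename f p) = 0 := by
  classical
  refine pderiv_eq_zero_of_notMem_vars fun hmem => hi ?_
  obtain ⟨s, -, rfl⟩ := Finset.mem_image.1 (vars_rename f p hmem)
  exact ⟨s, rfl⟩

theorem pderiv_inl_rename_mul {R : Type} [CommSemiring R] (f : MvPolynomial σ R)
    (g : MvPolynomial τ R) (i : σ) :
    pderiv (Sum.inl i) (rename Sum.inl f * rename Sum.inr g) =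
      rename Sum.inl (pderiv i f) * rename Sum.inr g := by
  rw [pderiv_mul, pderiv_rename Sum.inl_injective,
    pderiv_rename_of_notMem_range (by simp) g, mul_zero, add_zero]

theorem pderiv_inr_rename_mul {R : Type} [CommSemiring R] (f : MvPolynomial σ R)
    (g : MvPolynomial τ R) (j : τ) :
    pderiv (Sum.inr j) (rename Sum.inl f * rename Sum.inr g) =
      rename Sum.inl f * rename Sum.inr (pderiv j g) := by
  rw [pderiv_mul, pderiv_rename Sum.inr_injective,
    pderiv_rename_of_notMem_range (by simp) f, zero_mul, zero_add]

variable {f : MvPolynomial σ ℚ} {g : MvPolynomial τ ℚ}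

theorem rename_inl_mul_mem_jacobianIdeal {p : MvPolynomial σ ℚ} (hp : p ∈ jacobianIdeal f) :
    rename Sum.inl p * rename Sum.inr g ∈
      jacobianIdeal (rename Sum.inl f * rename Sum.inr g) := by
  induction hp using Submodule.span_induction with
  | mem _ hx =>
    obtain ⟨i, rfl⟩ := hx
    exact pderiv_inl_rename_mul f g i ▸ Ideal.subset_span ⟨_, rfl⟩
  | zero => simp
  | add _ _ _ _ hx hy => simpa only [map_add, add_mul] using add_mem hx hy
  | smul a _ _ hx => simpa only [smul_eq_mul, map_mul, mul_assoc] using Ideal.mul_mem_left _ _ hx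

theorem jacobianIdeal_rename_inl_mul_le (hf : f ∈ jacobianIdeal f) :
    jacobianIdeal (rename Sum.inl f * rename Sum.inr g) ≤
      (jacobianIdeal f).map (rename Sum.inl) := by
  refine Ideal.span_le.2 ?_
  rintro _ ⟨i | j, rfl⟩
  · dsimp only
    rw [pderiv_inl_rename_mul]
    exact Ideal.mul_mem_right _ _ (Ideal.mem_map_of_mem _ (Ideal.subset_span ⟨i, rfl⟩))
  · dsimp only
    rw [pderiv_inr_rename_mul]
    exact Ideal.mul_mem_right _ _ (Ideal.mem_map_of_mem _ hf)

theorem mem_of_rename_inl_mul_mem_map {K : Type} [Field K] [Infinite K]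
    {I : Ideal (MvPolynomial σ K)} {p : MvPolynomial σ K} {g : MvPolynomial τ K} (hg : g ≠ 0)
    (h : rename Sum.inl p * rename Sum.inr g ∈ I.map (rename Sum.inl)) : p ∈ I := by
  obtain ⟨y, hy⟩ : ∃ y, eval y g ≠ 0 := by
    by_contra! hzero
    exact hg (funext fun y => by simp [hzero])
  let ev : MvPolynomial (σ ⊕ τ) K →ₐ[K] MvPolynomial σ K := aeval (Sum.elim X (C ∘ y))
  have hev_inl : ∀ q, ev (rename Sum.inl q) = q := fun q => by
    rw [aeval_rename, Sum.elim_comp_inl, aeval_X_left_apply]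
  have hev_inr : ev (rename Sum.inr g) = C (eval y g) := by
    rw [aeval_rename, Sum.elim_comp_inr]
    exact (eval₂_comp_left C (RingHom.id K) y g).symm
  have hle : I.map (rename Sum.inl) ≤ I.comap ev :=
    Ideal.map_le_iff_le_comap.2 fun q hq => by rwa [Ideal.mem_comap, Ideal.mem_comap, hev_inl]
  have := hle h
  rwa [Ideal.mem_comap, map_mul, hev_inl, hev_inr,
    Ideal.mul_unit_mem_iff_mem _ ((isUnit_iff_ne_zero.2 hy).map C)] at this

end Jacobian

section Connectivity

variable {G : Multigraph V E} {S : Set E} {u v : V}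

theorem Adj.symm (h : G.Adj S u v) : G.Adj S v u :=
  let ⟨e, he, h⟩ := h
  ⟨e, he, h.symm⟩

instance : Std.Symm (G.Adj S) := ⟨fun _ _ => Adj.symm⟩

theorem ConnOn.diff_singleton {t : E} (h : G.ConnOn S)
    (ht : ReflTransGen (G.Adj (S \ {t})) (G.fst t) (G.snd t)) : G.ConnOn (S \ {t}) := by
  refine fun u v => ReflTransGen.lift' id (fun a b ⟨e, he, hab⟩ => ?_) _ _ (h u v)
  by_cases het : e = t
  · subst het
    rcases hab with ⟨rfl, rfl⟩ | ⟨rfl, rfl⟩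
    exacts [ht, Std.Symm.symm _ _ ht]
  · exact .single ⟨e, ⟨he, het⟩, hab⟩

theorem ConnOn.finite [Finite E] (h : G.ConnOn S) : Finite V := by
  rcases isEmpty_or_nonempty V with _ | ⟨⟨v₀⟩⟩
  · infer_instance
  refine Set.finite_univ_iff.1 <| (((Set.finite_range G.fst).union
    (Set.finite_range G.snd)).insert v₀).subset fun v _ => ?_
  rcases (h v₀ v).cases_tail with rfl | ⟨_, -, e, -, ⟨-, rfl⟩ | ⟨rfl, -⟩⟩
  exacts [.inl rfl, .inr (.inr ⟨e, rfl⟩), .inr (.inl ⟨e, rfl⟩)]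

theorem ConnectedGraph.exists_isSpanningTree [Fintype E] [DecidableEq E]
    (h : G.ConnectedGraph) : ∃ T, G.IsSpanningTree T := by
  obtain ⟨T, hT, hmin⟩ := (measure Finset.card).wf.has_min {T : Finset E | G.ConnOn T}
    ⟨Finset.univ, by rw [Set.mem_ofPred_eq, Finset.coe_univ]; exact h⟩
  exact ⟨T, hT, fun e he hconn => hmin _ hconn (Finset.card_erase_lt_of_mem he)⟩

theorem IsSpanningTree.not_reflTransGen_erase [DecidableEq E] {T : Finset E}
    (hT : G.IsSpanningTree T) {t : E} (ht : t ∈ T) :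
    ¬ ReflTransGen (G.Adj ↑(T.erase t)) (G.fst t) (G.snd t) := fun h =>
  hT.2 t ht <| by
    rw [Finset.coe_erase] at h ⊢
    exact hT.1.diff_singleton h

end Connectivity

section SpanningTree

variable {G : Multigraph V E} {S : Set E} {u v : V}

def ends (G : Multigraph V E) (e : E) : Sym2 V := s(G.fst e, G.snd e)

theorem adj_iff_exists_ends : G.Adj S u v ↔ ∃ e ∈ S, G.ends e = s(u, v) := by
  simp only [Adj, ends, Sym2.eq_iff]

/-- Loops and parallel edges are lost here, which is harmless for the edge sets of spanning
trees: they have neither. -/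
def toSimpleGraph (G : Multigraph V E) (S : Set E) : SimpleGraph V :=
  SimpleGraph.fromEdgeSet (G.ends '' S)

theorem toSimpleGraph_adj : (G.toSimpleGraph S).Adj u v ↔ G.Adj S u v ∧ u ≠ v := by
  simp only [toSimpleGraph, SimpleGraph.fromEdgeSet_adj, adj_iff_exists_ends, Set.mem_image]

theorem reachable_toSimpleGraph :
    (G.toSimpleGraph S).Reachable u v ↔ ReflTransGen (G.Adj S) u v := by
  rw [SimpleGraph.reachable_iff_reflTransGen]
  refine ⟨ReflTransGen.mono (fun _ _ h => (toSimpleGraph_adj.1 h).1) _ _,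
    ReflTransGen.lift' id (fun a b hab => ?_) _ _⟩
  by_cases h : a = b
  · exact h ▸ .refl
  · exact .single (toSimpleGraph_adj.2 ⟨hab, h⟩)

variable [DecidableEq E] {T : Finset E}

theorem IsSpanningTree.isTree [Nonempty V] (hT : G.IsSpanningTree T) :
    (G.toSimpleGraph T).IsTree where
  connected := ⟨fun u v => reachable_toSimpleGraph.2 (hT.1 u v)⟩
  isAcyclic := SimpleGraph.isAcyclic_iff_forall_adj_isBridge.2 fun u v huv hr => by
    obtain ⟨t, ht, htuv⟩ := adj_iff_exists_ends.1 (toSimpleGraph_adj.1 huv).1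
    have hle : (G.toSimpleGraph T).deleteEdges {s(u, v)} ≤ G.toSimpleGraph ↑(T.erase t) := by
      intro a b hab
      obtain ⟨hadj, hne⟩ := SimpleGraph.deleteEdges_adj.1 hab
      obtain ⟨hadj, hab_ne⟩ := toSimpleGraph_adj.1 hadj
      obtain ⟨e, he, heab⟩ := adj_iff_exists_ends.1 hadj
      have het : e ≠ t := by rintro rfl; exact hne (heab ▸ htuv)
      exact toSimpleGraph_adj.2 ⟨adj_iff_exists_ends.2 ⟨e, by simp [het, he], heab⟩, hab_ne⟩
    have := reachable_toSimpleGraph.1 (hr.mono hle)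
    rcases Sym2.eq_iff.1 htuv with ⟨rfl, rfl⟩ | ⟨rfl, rfl⟩
    exacts [hT.not_reflTransGen_erase ht this,
      hT.not_reflTransGen_erase ht (Std.Symm.symm _ _ this)]

theorem IsSpanningTree.injOn_ends (hT : G.IsSpanningTree T) : Set.InjOn G.ends T := by
  intro t ht t' ht' hends
  by_contra hne
  refine hT.not_reflTransGen_erase ht (.single (adj_iff_exists_ends.2 ⟨t', ?_, hends.symm⟩))
  simp [Ne.symm hne, ht']

theorem IsSpanningTree.edgeSet_toSimpleGraph (hT : G.IsSpanningTree T) :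
    (G.toSimpleGraph T).edgeSet = G.ends '' T := by
  refine (SimpleGraph.edgeSet_fromEdgeSet _).trans
    (sdiff_eq_self_iff_disjoint.2 (Set.disjoint_right.2 ?_))
  rintro _ ⟨t, ht, rfl⟩ hdiag
  exact hT.not_reflTransGen_erase ht (Sym2.mk_isDiag_iff.1 hdiag ▸ .refl)

theorem IsSpanningTree.card_add_one [Finite E] [Nonempty V] (hT : G.IsSpanningTree T) :
    T.card + 1 = Nat.card V := by
  have := hT.1.finite
  have := Fintype.ofFinite V
  classical
  have h := hT.isTree.card_edgeFinset
  rwa [← Set.ncard_coe_finset, SimpleGraph.coe_edgeFinset, hT.edgeSet_toSimpleGraph,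
    hT.injOn_ends.ncard_image, Set.ncard_coe_finset, ← Nat.card_eq_fintype_card] at h

theorem IsSpanningTree.card_eq [Finite E] {T' : Finset E} (hT : G.IsSpanningTree T)
    (hT' : G.IsSpanningTree T') : T.card = T'.card := by
  cases isEmpty_or_nonempty V
  · have : IsEmpty E := G.fst.isEmpty
    simp [Finset.eq_empty_of_isEmpty]
  · have := hT.card_add_one
    have := hT'.card_add_one
    omega

end SpanningTree

section Kirchhoff

variable [Fintype E] [DecidableEq E] {G : Multigraph V E}

theorem IsSpanningTree.isHomogeneous_kirchhoff {T : Finset E} (hT : G.IsSpanningTree T) :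
    G.kirchhoff.IsHomogeneous Tᶜ.card := by
  refine IsHomogeneous.sum _ _ _ fun T' _ => ?_
  split_ifs with hT'
  · rw [Finset.card_compl, hT.card_eq hT', ← Finset.card_compl]
    simpa using IsHomogeneous.prod T'ᶜ (fun e => (X e : MvPolynomial E ℚ)) (fun _ => 1)
      fun e _ => isHomogeneous_X ℚ e
  · exact isHomogeneous_zero _ _ _

theorem kirchhoff_eq_zero (h : ∀ T, ¬ G.IsSpanningTree T) : G.kirchhoff = 0 :=
  Finset.sum_eq_zero fun T _ => if_neg (h T)

theorem kirchhoff_ne_zero (hG : G.ConnectedGraph) : G.kirchhoff ≠ 0 := by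
  obtain ⟨T, hT⟩ := hG.exists_isSpanningTree
  intro h0
  -- at the all-ones point `Ψ` counts the spanning trees
  have := congrArg (eval 1) h0
  simp only [kirchhoff, map_sum, apply_ite, map_prod, eval_X, Pi.one_apply,
    Finset.prod_const_one, map_zero, Finset.sum_boole, Nat.cast_eq_zero, Finset.card_eq_zero,
    Finset.filter_eq_empty_iff, Finset.mem_univ, forall_const] at this
  exact this hT

theorem kirchhoff_mem_jacobianIdeal (hG : ¬ G.IsTreeGraph) :
    G.kirchhoff ∈ jacobianIdeal G.kirchhoff := by
  by_cases h : ∃ T, G.IsSpanningTree T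
  · obtain ⟨T, hT⟩ := h
    refine mem_jacobianIdeal_of_isHomogeneous hT.isHomogeneous_kirchhoff ?_
    rw [Ne, Finset.card_eq_zero, Finset.compl_eq_empty_iff]
    rintro rfl
    exact hG hT
  · rw [kirchhoff_eq_zero (not_exists.1 h)]
    exact zero_mem _

end Kirchhoff

section Relabel

variable {G : Multigraph V E}

def comapEdges (G : Multigraph V E) (σ : F → E) : Multigraph V F :=
  ⟨G.fst ∘ σ, G.snd ∘ σ⟩

theorem adj_comapEdges (σ : F → E) (S : Set F) :
    (G.comapEdges σ).Adj S = G.Adj (σ '' S) := by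
  ext u v
  simp [Adj, comapEdges]

theorem connOn_comapEdges (σ : F → E) (S : Set F) :
    (G.comapEdges σ).ConnOn S ↔ G.ConnOn (σ '' S) := by
  rw [ConnOn, adj_comapEdges, ConnOn]

theorem isSpanningTree_comapEdges [DecidableEq E] [DecidableEq F] (σ : F ≃ E) (T : Finset F) :
    (G.comapEdges σ).IsSpanningTree T ↔ G.IsSpanningTree (T.map σ.toEmbedding) := by
  simp only [IsSpanningTree, connOn_comapEdges, Finset.coe_map, Finset.forall_mem_map,
    ← Finset.map_erase]
  rfl

theorem rename_kirchhoff_comapEdges [Fintype E] [DecidableEq E] [Fintype F] [DecidableEq F]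
    (σ : F ≃ E) : rename σ (G.comapEdges σ).kirchhoff = G.kirchhoff := by
  rw [kirchhoff, kirchhoff, map_sum]
  refine Fintype.sum_equiv σ.finsetCongr _ _ fun T => ?_
  have hcompl : (T.map σ.toEmbedding)ᶜ = Tᶜ.map σ.toEmbedding := by
    ext e
    obtain ⟨f, rfl⟩ := σ.surjective e
    simp
  rw [Equiv.finsetCongr_apply, ← isSpanningTree_comapEdges, hcompl]
  split_ifs <;> simp [map_prod]

end Relabel

structure IsOneVertexJoin (G : Multigraph V E) (H : Multigraph V' E')
    (K : Multigraph W (E ⊕ E')) (φ : V → W) (φ' : V' → W) (w₀ : W) : Prop where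
  injective_left : Function.Injective φ
  injective_right : Function.Injective φ'
  ends_inl : ∀ e, K.fst (Sum.inl e) = φ (G.fst e) ∧ K.snd (Sum.inl e) = φ (G.snd e)
  ends_inr : ∀ e', K.fst (Sum.inr e') = φ' (H.fst e') ∧ K.snd (Sum.inr e') = φ' (H.snd e')
  range_union : Set.range φ ∪ Set.range φ' = Set.univ
  range_inter : Set.range φ ∩ Set.range φ' = {w₀}

def sumDeleteInlEquiv (e : E) : {e' : E // e' ≠ e} ⊕ E' ≃ {s : E ⊕ E' // s ≠ .inl e} :=
  ((Equiv.subtypeEquivRight fun _ => Sum.inl_injective.ne_iff.symm).sumCongr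
    (Equiv.subtypeUnivEquiv fun _ => Sum.inr_ne_inl).symm).trans
    (Equiv.subtypeSum (p := (· ≠ .inl e))).symm

namespace IsOneVertexJoin

variable {G : Multigraph V E} {H : Multigraph V' E'} {K : Multigraph W (E ⊕ E')}
  {φ : V → W} {φ' : V' → W} {w₀ : W} (h : IsOneVertexJoin G H K φ φ' w₀)
include h

theorem swap : IsOneVertexJoin H G (K.comapEdges Sum.swap) φ' φ w₀ :=
  ⟨h.injective_right, h.injective_left, h.ends_inr, h.ends_inl,
    Set.union_comm _ _ ▸ h.range_union, Set.inter_comm _ _ ▸ h.range_inter⟩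

theorem eq_of_mem_range_right {x : V} (hx : φ x ∈ Set.range φ') : φ x = w₀ :=
  h.range_inter.subset ⟨⟨x, rfl⟩, hx⟩

theorem reflTransGen_left_iff {S : Set (E ⊕ E')} {x y : V} :
    ReflTransGen (K.Adj S) (φ x) (φ y) ↔ ReflTransGen (G.Adj (Sum.inl ⁻¹' S)) x y := by
  classical
  constructor
  · intro hxy
    obtain ⟨u₀, hu₀⟩ : w₀ ∈ Set.range φ := (h.range_inter.ge rfl).1
    have : Nonempty V := ⟨u₀⟩
    -- retract `W` onto `V`, collapsing the `H` side to the gluing vertex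
    let ρ : W → V := fun w => if w ∈ Set.range φ' then u₀ else Function.invFun φ w
    have hρ_left : ∀ x, ρ (φ x) = x := fun x => by
      by_cases hx : φ x ∈ Set.range φ'
      · exact (if_pos hx).trans
          (h.injective_left (hu₀.trans (h.eq_of_mem_range_right hx).symm))
      · exact (if_neg hx).trans (Function.leftInverse_invFun h.injective_left x)
    have hρ_right : ∀ x', ρ (φ' x') = u₀ := fun x' => if_pos ⟨x', rfl⟩
    have step : ∀ a b, K.Adj S a b → ReflTransGen (G.Adj (Sum.inl ⁻¹' S)) (ρ a) (ρ b) := by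
      rintro a b ⟨i | j, hs, hab⟩
      · rcases hab with ⟨rfl, rfl⟩ | ⟨rfl, rfl⟩ <;>
          simp only [(h.ends_inl i).1, (h.ends_inl i).2, hρ_left]
        exacts [.single ⟨i, hs, .inl ⟨rfl, rfl⟩⟩, .single ⟨i, hs, .inr ⟨rfl, rfl⟩⟩]
      · rcases hab with ⟨rfl, rfl⟩ | ⟨rfl, rfl⟩ <;>
          simp only [(h.ends_inr j).1, (h.ends_inr j).2, hρ_right] <;> exact .refl
    simpa only [Function.onFun, hρ_left] using ReflTransGen.lift' ρ step _ _ hxy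
  · refine fun hxy => ReflTransGen.lift φ (fun a b hab => ?_) _ _ hxy
    obtain ⟨i, hi, hab⟩ := hab
    refine ⟨.inl i, hi, ?_⟩
    rw [(h.ends_inl i).1, (h.ends_inl i).2]
    rcases hab with ⟨rfl, rfl⟩ | ⟨rfl, rfl⟩
    exacts [.inl ⟨rfl, rfl⟩, .inr ⟨rfl, rfl⟩]

theorem reflTransGen_right_iff {S : Set (E ⊕ E')} {x y : V'} :
    ReflTransGen (K.Adj S) (φ' x) (φ' y) ↔ ReflTransGen (H.Adj (Sum.inr ⁻¹' S)) x y := by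
  have := h.swap.reflTransGen_left_iff (S := Sum.swap ⁻¹' S) (x := x) (y := y)
  rwa [adj_comapEdges, Set.image_preimage_eq _ Sum.swap_leftInverse.surjective] at this

theorem connOn_iff (S : Set (E ⊕ E')) :
    K.ConnOn S ↔ G.ConnOn (Sum.inl ⁻¹' S) ∧ H.ConnOn (Sum.inr ⁻¹' S) := by
  refine ⟨fun hK => ⟨fun x y => h.reflTransGen_left_iff.1 (hK _ _),
    fun x y => h.reflTransGen_right_iff.1 (hK _ _)⟩, fun ⟨hG, hH⟩ => ?_⟩
  obtain ⟨⟨u₀, hu₀⟩, ⟨u₀', hu₀'⟩⟩ : w₀ ∈ Set.range φ ∩ Set.range φ' := h.range_inter.ge rfl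
  have hw₀ : ∀ w, ReflTransGen (K.Adj S) w w₀ := fun w => by
    rcases h.range_union.ge (Set.mem_univ w) with ⟨x, rfl⟩ | ⟨x, rfl⟩
    · exact hu₀ ▸ h.reflTransGen_left_iff.2 (hG x u₀)
    · exact hu₀' ▸ h.reflTransGen_right_iff.2 (hH x u₀')
  exact fun a b => (hw₀ a).trans (Std.Symm.symm _ _ (hw₀ b))

theorem connOn_disjSum_iff (A : Finset E) (B : Finset E') :
    K.ConnOn ↑(A.disjSum B) ↔ G.ConnOn ↑A ∧ H.ConnOn ↑B := by
  have hA : Sum.inl ⁻¹' (A.disjSum B : Set (E ⊕ E')) = A := by ext; simp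
  have hB : Sum.inr ⁻¹' (A.disjSum B : Set (E ⊕ E')) = B := by ext; simp
  rw [h.connOn_iff, hA, hB]

theorem isSpanningTree_disjSum_iff [DecidableEq E] [DecidableEq E'] (A : Finset E)
    (B : Finset E') :
    K.IsSpanningTree (A.disjSum B) ↔ G.IsSpanningTree A ∧ H.IsSpanningTree B := by
  have erase_inl : ∀ a, (A.disjSum B).erase (.inl a) = (A.erase a).disjSum B := fun a => by
    ext (_ | _) <;> simp
  have erase_inr : ∀ b, (A.disjSum B).erase (.inr b) = A.disjSum (B.erase b) := fun b => by
    ext (_ | _) <;> simp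
  simp only [IsSpanningTree, h.connOn_disjSum_iff]
  constructor
  · rintro ⟨⟨hA, hB⟩, hmin⟩
    refine ⟨⟨hA, fun a ha hA' => hmin (.inl a) (by simpa) ?_⟩,
      ⟨hB, fun b hb hB' => hmin (.inr b) (by simpa) ?_⟩⟩
    · rw [erase_inl, h.connOn_disjSum_iff]
      exact ⟨hA', hB⟩
    · rw [erase_inr, h.connOn_disjSum_iff]
      exact ⟨hA, hB'⟩
  · rintro ⟨⟨hA, hAmin⟩, ⟨hB, hBmin⟩⟩
    refine ⟨⟨hA, hB⟩, ?_⟩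
    rintro (a | b) hs hK
    · rw [erase_inl, h.connOn_disjSum_iff] at hK
      exact hAmin a (by simpa using hs) hK.1
    · rw [erase_inr, h.connOn_disjSum_iff] at hK
      exact hBmin b (by simpa using hs) hK.2

theorem kirchhoff_eq [Fintype E] [DecidableEq E] [Fintype E'] [DecidableEq E'] :
    K.kirchhoff = rename Sum.inl G.kirchhoff * rename Sum.inr H.kirchhoff := by
  rw [kirchhoff, kirchhoff, kirchhoff, map_sum, map_sum, Finset.sum_mul_sum,
    ← Fintype.sum_prod_type']
  refine (Fintype.sum_equiv Finset.sumEquiv.symm.toEquiv _ _ fun ⟨A, B⟩ => ?_).symm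
  have hcompl : (A.disjSum B)ᶜ = Aᶜ.disjSum Bᶜ := by
    ext (_ | _) <;> simp
  dsimp only [RelIso.coe_fn_toEquiv, Finset.sumEquiv_symm_apply]
  by_cases hA : G.IsSpanningTree A <;> by_cases hB : H.IsSpanningTree B <;>
    simp [h.isSpanningTree_disjSum_iff, hA, hB, hcompl, Finset.prod_disjSum, map_prod]

theorem delete (e : E) :
    IsOneVertexJoin (G.delete e) H ((K.delete (.inl e)).comapEdges (sumDeleteInlEquiv e))
      φ φ' w₀ :=
  ⟨h.injective_left, h.injective_right, fun a => h.ends_inl a.1, h.ends_inr, h.range_union,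
    h.range_inter⟩

theorem rename_kirchhoff_delete_inl [Fintype E] [DecidableEq E] [Fintype E'] [DecidableEq E']
    (e : E) :
    rename Subtype.val (K.delete (.inl e)).kirchhoff =
      rename Sum.inl (rename Subtype.val (G.delete e).kirchhoff) *
        rename Sum.inr H.kirchhoff := by
  rw [← rename_kirchhoff_comapEdges (sumDeleteInlEquiv e), (h.delete e).kirchhoff_eq]
  simp only [map_mul, rename_rename]
  rfl

end IsOneVertexJoin

end Multigraph

open Multigraph MvPolynomial in
theorem cond1_one_vertex_join_general {V E V' E' W : Type}
    [Fintype E] [DecidableEq E] [Fintype E'] [DecidableEq E']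
    (G : Multigraph V E) (H : Multigraph V' E') (K : Multigraph W (E ⊕ E'))
    (φ : V → W) (φ' : V' → W) (w0 : W)
    (hφ : Function.Injective φ) (hφ' : Function.Injective φ')
    (hc : ∀ e : E, K.fst (Sum.inl e) = φ (G.fst e) ∧ K.snd (Sum.inl e) = φ (G.snd e))
    (hc' : ∀ e' : E', K.fst (Sum.inr e') = φ' (H.fst e') ∧
      K.snd (Sum.inr e') = φ' (H.snd e'))
    (hcover : Set.range φ ∪ Set.range φ' = Set.univ)
    (hmeet : Set.range φ ∩ Set.range φ' = {w0})
    (hH : H.ConnectedGraph)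
    (e : E) (hreg : G.IsRegular e) :
    G.Cond1 e ↔ K.Cond1 (Sum.inl e) := by
  have hJ : IsOneVertexJoin G H K φ φ' w0 := ⟨hφ, hφ', hc, hc', hcover, hmeet⟩
  have hG_del := rename_mem_jacobianIdeal Subtype.val_injective
    (kirchhoff_mem_jacobianIdeal hreg.2.2)
  rw [Cond1, Cond1, hJ.kirchhoff_eq, hJ.rename_kirchhoff_delete_inl]
  exact ⟨rename_inl_mul_mem_jacobianIdeal, fun hK => mem_of_rename_inl_mul_mem_map
    (kirchhoff_ne_zero hH) (jacobianIdeal_rename_inl_mul_le hG_del hK)⟩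

open Multigraph MvPolynomial in
/-- One-vertex join invariance of Condition 1: if the connected graphs `G` and
`H` are joined at exactly one vertex to form `K`, and `e` is a regular edge of
`G`, then Condition 1 holds for `(G, e)` iff it holds for `(K, e)`. -/
theorem cond1_one_vertex_join {V E V' E' W : Type}
    [Fintype E] [DecidableEq E] [Fintype E'] [DecidableEq E']
    (G : Multigraph V E) (H : Multigraph V' E') (K : Multigraph W (E ⊕ E'))
    (φ : V → W) (φ' : V' → W) (w0 : W)
    (hφ : Function.Injective φ) (hφ' : Function.Injective φ')
    (hc : ∀ e : E, K.fst (Sum.inl e) = φ (G.fst e) ∧ K.snd (Sum.inl e) = φ (G.snd e))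
    (hc' : ∀ e' : E', K.fst (Sum.inr e') = φ' (H.fst e') ∧
      K.snd (Sum.inr e') = φ' (H.snd e'))
    (hcover : Set.range φ ∪ Set.range φ' = Set.univ)
    (hmeet : Set.range φ ∩ Set.range φ' = {w0})
    (hG : G.ConnectedGraph) (hH : H.ConnectedGraph)
    (e : E) (hreg : G.IsRegular e) :
    G.Cond1 e ↔ K.Cond1 (Sum.inl e) :=
  cond1_one_vertex_join_general G H K φ φ' w0 hφ hφ' hc hc' hcover hmeet hH e hreg
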